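/- Fix τ > 0, σ > 0, S ≥ 0, H ∈ (0,1) and an integer n ≥ 2. On a probability space let (p*_i)_{0 ≤ i ≤ n−1} be centered square-integrable random variables with E[(p*_j − p*_i)²] = σ²·((j−i)τ)^{2H} for all 0 ≤ i ≤ j ≤ n−1, and let (η_i)_{0 ≤ i ≤ n−1} be i.i.d. uniform on {−S/2, S/2}, independent of (p*_i); set p_i = p*_i + η_i. Then for every v ∈ {1,2,3} and all integers L ≠ L' with 1 ≤ L, L' < n (and k_v(n,L) ≥ 1, k_v(n,L') ≥ 1), the standard spread estimator is biased with bias E[Ŝ²_{1,v}(n,L,L')] − S² = 2σ²τ^{2H}·(L'·L^{2H} − L·L'^{2H})/(L'−L); in particular for (L,L') = (1,2) the bias equals 4σ²τ^{2H}(1 − 2^{2H−1}), which is positive when H < 1/2 and negative when H > 1/2. -/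

import Mathlib

open MeasureTheory ProbabilityTheory Filter Finset
open scoped NNReal ENNReal Topology

/-!
The observed increment `p_j - p_i` splits as `(p*_j - p*_i) + (S/2)(X_j - X_i)` with independent
summands, the noise part being centred, so its second moment is `σ²((j-i)τ)^{2H} + S²/2`: a function
of the lag alone. Each `V̂_v(n,L)` averages squared increments of lag `L`, hence
`E V̂_v(n,L) = σ²(Lτ)^{2H} + S²/2` for `v = 1, 2, 3`. The combination defining `Ŝ²` kills any
variogram linear in the lag and returns twice its constant term, here `S²`; for `H ≠ 1/2` the
fBm part is not linear and survives.
-/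

/-- Observed log-price on the grid: `p_i = Σ_{j<i} ξ_j + η_i` with `η_i = (S/2)·X_i`. -/
noncomputable def price {Ω : Type*} (ξ X : ℕ → Ω → ℝ) (S : ℝ) (i : ℕ) (ω : Ω) : ℝ :=
  (∑ j ∈ Finset.range i, ξ j ω) + S / 2 * X i ω

/-- Empirical variance with overlapping increments, `k₁(n,L) = n − L`. -/
noncomputable def Vhat1 {Ω : Type*} (p : ℕ → Ω → ℝ) (n L : ℕ) (ω : Ω) : ℝ :=
  ((n - L : ℕ) : ℝ)⁻¹ * ∑ i ∈ Finset.range (n - L), (p (i + L) ω - p i ω) ^ 2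

/-- Empirical variance with non-overlapping increments, `k₂(n,L) = ⌊(n−1)/L⌋`. -/
noncomputable def Vhat2 {Ω : Type*} (p : ℕ → Ω → ℝ) (n L : ℕ) (ω : Ω) : ℝ :=
  (((n - 1) / L : ℕ) : ℝ)⁻¹ *
    ∑ i ∈ Finset.range ((n - 1) / L), (p ((i + 1) * L) ω - p (i * L) ω) ^ 2

/-- Empirical variance with strictly disjoint increments, `k₃(n,L) = ⌊n/(L+1)⌋`. -/
noncomputable def Vhat3 {Ω : Type*} (p : ℕ → Ω → ℝ) (n L : ℕ) (ω : Ω) : ℝ :=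
  ((n / (L + 1) : ℕ) : ℝ)⁻¹ *
    ∑ i ∈ Finset.range (n / (L + 1)), (p (i + (i + 1) * L) ω - p (i + i * L) ω) ^ 2

/-- Spread estimator `Ŝ²_{1,v}(n,L,L') = (2/(L'−L))(L'·V̂_v(n,L) − L·V̂_v(n,L'))`. -/
noncomputable def Shat {Ω : Type*} (Vh : ℕ → ℕ → Ω → ℝ) (n L L' : ℕ) (ω : Ω) : ℝ :=
  2 / ((L' : ℝ) - (L : ℝ)) * ((L' : ℝ) * Vh n L ω - (L : ℝ) * Vh n L' ω)

section Increments

variable {Ω : Type*} [MeasurableSpace Ω] {μ : Measure Ω}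

theorem integral_add_mul_sq_of_indepFun {D Y : Ω → ℝ} (hD : MemLp D 2 μ) (hY : MemLp Y 2 μ)
    (hDY : IndepFun D Y μ) (hY0 : ∫ ω, Y ω ∂μ = 0) (c : ℝ) :
    ∫ ω, (D ω + c * Y ω) ^ 2 ∂μ = ∫ ω, D ω ^ 2 ∂μ + c ^ 2 * ∫ ω, Y ω ^ 2 ∂μ := by
  have hcross : ∫ ω, D ω * Y ω ∂μ = 0 := by
    rw [hDY.integral_fun_mul_eq_mul_integral hD.aestronglyMeasurable hY.aestronglyMeasurable,
      hY0, mul_zero]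
  have hDYint : Integrable (fun ω => D ω * Y ω) μ := hD.integrable_mul hY
  calc ∫ ω, (D ω + c * Y ω) ^ 2 ∂μ
      = ∫ ω, (D ω ^ 2 + 2 * c * (D ω * Y ω) + c ^ 2 * Y ω ^ 2) ∂μ := by
        congr 1 with ω; ring
    _ = ∫ ω, D ω ^ 2 ∂μ + 2 * c * ∫ ω, D ω * Y ω ∂μ + c ^ 2 * ∫ ω, Y ω ^ 2 ∂μ := by
        have hlin : Integrable (fun ω => D ω ^ 2 + 2 * c * (D ω * Y ω)) μ :=
          hD.integrable_sq.add (hDYint.const_mul _)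
        rw [integral_add hlin (hY.integrable_sq.const_mul _),
          integral_add hD.integrable_sq (hDYint.const_mul _), integral_const_mul,
          integral_const_mul]
    _ = ∫ ω, D ω ^ 2 ∂μ + c ^ 2 * ∫ ω, Y ω ^ 2 ∂μ := by rw [hcross]; ring

variable [IsProbabilityMeasure μ]

theorem memLp_of_sign {X : Ω → ℝ} (hX : Measurable X) (hXval : ∀ ω, X ω = 1 ∨ X ω = -1)
    (p : ℝ≥0∞) : MemLp X p μ :=
  MemLp.of_bound hX.aestronglyMeasurable 1 <| .of_forall fun ω => by
    rcases hXval ω with h | h <;> simp [h]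

theorem integral_eq_zero_of_sign {X : Ω → ℝ} (hX : Measurable X)
    (hXval : ∀ ω, X ω = 1 ∨ X ω = -1) (hXlaw : μ {ω | X ω = 1} = 1 / 2) :
    ∫ ω, X ω ∂μ = 0 := by
  set A := {ω | X ω = 1}
  have hA : MeasurableSet A := hX (measurableSet_singleton 1)
  have hXA : X = fun ω => 2 * A.indicator 1 ω - 1 := by
    funext ω
    rcases hXval ω with h | h <;> simp [A, Set.indicator_apply, h] <;> norm_num
  rw [hXA, integral_sub ((integrable_indicator_iff hA).2 (integrable_const 1).integrableOn
      |>.const_mul 2) (integrable_const 1), integral_const_mul, integral_indicator_one hA,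
    measureReal_def, hXlaw]
  norm_num

theorem integral_sub_sq_of_sign {X X' : Ω → ℝ} (hX : Measurable X) (hX' : Measurable X')
    (hXval : ∀ ω, X ω = 1 ∨ X ω = -1) (hX'val : ∀ ω, X' ω = 1 ∨ X' ω = -1)
    (hind : IndepFun X X' μ) (hX0 : ∫ ω, X ω ∂μ = 0) :
    ∫ ω, (X' ω - X ω) ^ 2 ∂μ = 2 := by
  have hsq : ∀ ω, (X' ω - X ω) ^ 2 = 2 - 2 * (X ω * X' ω) := fun ω => by
    rcases hXval ω with h | h <;> rcases hX'val ω with h' | h' <;> rw [h, h'] <;> norm_num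
  have hprod : ∫ ω, X ω * X' ω ∂μ = 0 := by
    rw [hind.integral_fun_mul_eq_mul_integral hX.aestronglyMeasurable
      hX'.aestronglyMeasurable, hX0, zero_mul]
  have hint : Integrable (fun ω => X ω * X' ω) μ :=
    (memLp_of_sign hX hXval 2).integrable_mul (memLp_of_sign hX' hX'val 2)
  simp_rw [hsq]
  rw [integral_sub (integrable_const 2) (hint.const_mul 2), integral_const_mul, hprod]
  simp

end Increments

section Variogram

variable {Ω : Type*} [MeasurableSpace Ω]

def HasVariogram (μ : Measure Ω) (p : ℕ → Ω → ℝ) (n : ℕ) (γ : ℕ → ℝ) : Prop :=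
  ∀ i j, i < j → j < n →
    Integrable (fun ω => (p j ω - p i ω) ^ 2) μ ∧ ∫ ω, (p j ω - p i ω) ^ 2 ∂μ = γ (j - i)

variable {μ : Measure Ω} {p : ℕ → Ω → ℝ} {n : ℕ} {γ : ℕ → ℝ}

theorem HasVariogram.average_sq_increments_unbiased (hp : HasVariogram μ p n γ) {L k : ℕ}
    (hk : k ≠ 0) {a b : ℕ → ℕ} (hab : ∀ i < k, b i + L = a i) (hL : 1 ≤ L)
    (han : ∀ i < k, a i < n) :
    Integrable (fun ω => (k : ℝ)⁻¹ * ∑ i ∈ range k, (p (a i) ω - p (b i) ω) ^ 2) μ ∧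
      ∫ ω, (k : ℝ)⁻¹ * ∑ i ∈ range k, (p (a i) ω - p (b i) ω) ^ 2 ∂μ = γ L := by
  have hinc : ∀ i ∈ range k, Integrable (fun ω => (p (a i) ω - p (b i) ω) ^ 2) μ ∧
      ∫ ω, (p (a i) ω - p (b i) ω) ^ 2 ∂μ = γ L := fun i hi => by
    have hi := mem_range.1 hi
    have := hp (b i) (a i) (by grind) (han i hi)
    rw [← hab i hi, Nat.add_sub_cancel_left] at this
    rwa [← hab i hi]
  refine ⟨(integrable_finsetSum _ fun i hi => (hinc i hi).1).const_mul _, ?_⟩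
  rw [integral_const_mul, integral_finsetSum _ fun i hi => (hinc i hi).1,
    sum_congr rfl fun i hi => (hinc i hi).2, sum_const, card_range, nsmul_eq_mul,
    inv_mul_cancel_left₀ (Nat.cast_ne_zero.2 hk)]

theorem HasVariogram.vhat1_unbiased (hp : HasVariogram μ p n γ) {L : ℕ} (hL : 1 ≤ L) (hLn : L < n) :
    Integrable (Vhat1 p n L) μ ∧ ∫ ω, Vhat1 p n L ω ∂μ = γ L :=
  hp.average_sq_increments_unbiased (by omega) (fun _ _ => rfl) hL (fun _ _ => by omega)

theorem HasVariogram.vhat2_unbiased (hp : HasVariogram μ p n γ) {L : ℕ} (hL : 1 ≤ L) (hLn : L < n) :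
    Integrable (Vhat2 p n L) μ ∧ ∫ ω, Vhat2 p n L ω ∂μ = γ L := by
  refine hp.average_sq_increments_unbiased ?_ (fun i _ => by ring) hL fun i hi => ?_
  · exact (Nat.div_pos (by omega) (by omega)).ne'
  · have : (i + 1) * L ≤ n - 1 := (Nat.le_div_iff_mul_le (by omega)).1 hi
    omega

theorem HasVariogram.vhat3_unbiased (hp : HasVariogram μ p n γ) {L : ℕ} (hL : 1 ≤ L) (hLn : L < n) :
    Integrable (Vhat3 p n L) μ ∧ ∫ ω, Vhat3 p n L ω ∂μ = γ L := by
  refine hp.average_sq_increments_unbiased ?_ (fun i _ => by ring) hL fun i hi => ?_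
  · exact (Nat.div_pos (by omega) (by omega)).ne'
  · have : (i + 1) * (L + 1) ≤ n := (Nat.le_div_iff_mul_le (by omega)).1 hi
    nlinarith

theorem integral_Shat {Vh : ℕ → ℕ → Ω → ℝ} {L L' : ℕ} (hL : Integrable (Vh n L) μ)
    (hL' : Integrable (Vh n L') μ) :
    ∫ ω, Shat Vh n L L' ω ∂μ =
      2 / ((L' : ℝ) - L) * (L' * ∫ ω, Vh n L ω ∂μ - L * ∫ ω, Vh n L' ω ∂μ) := by
  simp only [Shat]
  rw [integral_const_mul, integral_sub (hL.const_mul _) (hL'.const_mul _), integral_const_mul,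
    integral_const_mul]

theorem spreadEstimator_bias_of_fBm_variogram {σ τ H S L L' : ℝ} (hτ : 0 ≤ τ) (hL : 0 ≤ L)
    (hL' : 0 ≤ L') (hne : L ≠ L') :
    2 / (L' - L) * (L' * (σ ^ 2 * (L * τ) ^ (2 * H) + S ^ 2 / 2)
        - L * (σ ^ 2 * (L' * τ) ^ (2 * H) + S ^ 2 / 2)) - S ^ 2
      = 2 * σ ^ 2 * τ ^ (2 * H) * (L' * L ^ (2 * H) - L * L' ^ (2 * H)) / (L' - L) := by
  have : L' - L ≠ 0 := sub_ne_zero.2 hne.symm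
  rw [Real.mul_rpow hL hτ, Real.mul_rpow hL' hτ]
  field_simp
  ring

theorem integral_Shat_sub_sq_of_fBm_variogram {Vh : ℕ → ℕ → Ω → ℝ} {σ τ H S : ℝ} {L L' : ℕ}
    (hτ : 0 ≤ τ) (hne : L ≠ L')
    (hL : Integrable (Vh n L) μ ∧ ∫ ω, Vh n L ω ∂μ = σ ^ 2 * ((L : ℝ) * τ) ^ (2 * H) + S ^ 2 / 2)
    (hL' : Integrable (Vh n L') μ ∧
      ∫ ω, Vh n L' ω ∂μ = σ ^ 2 * ((L' : ℝ) * τ) ^ (2 * H) + S ^ 2 / 2) :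
    ∫ ω, Shat Vh n L L' ω ∂μ - S ^ 2 = 2 * σ ^ 2 * τ ^ (2 * H) *
      ((L' : ℝ) * (L : ℝ) ^ (2 * H) - (L : ℝ) * (L' : ℝ) ^ (2 * H)) / ((L' : ℝ) - (L : ℝ)) := by
  rw [integral_Shat hL.1 hL'.1, hL.2, hL'.2]
  exact spreadEstimator_bias_of_fBm_variogram hτ L.cast_nonneg L'.cast_nonneg
    (Nat.cast_injective.ne hne)

end Variogram

theorem hasVariogram_add_mul_sign {Ω : Type*} [MeasurableSpace Ω] {μ : Measure Ω}
    [IsProbabilityMeasure μ] {n : ℕ} {pstar X : ℕ → Ω → ℝ} {γ : ℕ → ℝ} (S : ℝ)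
    (hpL2 : ∀ i < n, MemLp (pstar i) 2 μ)
    (hpincr : ∀ i j, i < j → j < n → ∫ ω, (pstar j ω - pstar i ω) ^ 2 ∂μ = γ (j - i))
    (hXm : ∀ i, Measurable (X i)) (hXval : ∀ i < n, ∀ ω, X i ω = 1 ∨ X i ω = -1)
    (hXlaw : ∀ i < n, μ {ω | X i ω = 1} = 1 / 2)
    (hXindep : iIndepFun (fun i : Fin n => X i) μ)
    (hindep : IndepFun (fun ω (i : Fin n) => pstar i ω) (fun ω (i : Fin n) => X i ω) μ) :
    HasVariogram μ (fun i ω => pstar i ω + S / 2 * X i ω) n (fun h => γ h + S ^ 2 / 2) := by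
  intro i j hij hjn
  have hin : i < n := hij.trans hjn
  set D := fun ω => pstar j ω - pstar i ω
  set Y := fun ω => X j ω - X i ω
  have hD : MemLp D 2 μ := (hpL2 j hjn).sub (hpL2 i hin)
  have hY : MemLp Y 2 μ :=
    (memLp_of_sign (hXm j) (hXval j hjn) 2).sub (memLp_of_sign (hXm i) (hXval i hin) 2)
  have hDY : IndepFun D Y μ := by
    have hlag : Measurable fun v : Fin n → ℝ => v ⟨j, hjn⟩ - v ⟨i, hin⟩ := by fun_prop
    exact hindep.comp hlag hlag
  have hXi0 := integral_eq_zero_of_sign (hXm i) (hXval i hin) (hXlaw i hin)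
  have hY0 : ∫ ω, Y ω ∂μ = 0 := by
    rw [integral_sub ((memLp_of_sign (hXm j) (hXval j hjn) 1).integrable le_rfl)
      ((memLp_of_sign (hXm i) (hXval i hin) 1).integrable le_rfl),
      integral_eq_zero_of_sign (hXm j) (hXval j hjn) (hXlaw j hjn), hXi0, sub_zero]
  have hY2 : ∫ ω, Y ω ^ 2 ∂μ = 2 :=
    integral_sub_sq_of_sign (hXm i) (hXm j) (hXval i hin) (hXval j hjn)
      (hXindep.indepFun (i := ⟨i, hin⟩) (j := ⟨j, hjn⟩) (by simp [hij.ne])) hXi0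
  have hinc : ∀ ω, pstar j ω + S / 2 * X j ω - (pstar i ω + S / 2 * X i ω) =
      D ω + S / 2 * Y ω := fun ω => by simp only [D, Y]; ring
  simp only [hinc]
  refine ⟨(hD.add (hY.const_mul _)).integrable_sq, ?_⟩
  rw [integral_add_mul_sq_of_indepFun hD hY hDY hY0, hpincr i j hij hjn, hY2]
  ring

theorem fBm_spread_bias_one_two (σ τ H : ℝ) :
    2 * σ ^ 2 * τ ^ (2 * H) * (2 * 1 ^ (2 * H) - 1 * 2 ^ (2 * H)) / (2 - 1)
      = 4 * σ ^ 2 * τ ^ (2 * H) * (1 - 2 ^ (2 * H - 1)) := by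
  rw [Real.one_rpow, Real.rpow_sub two_pos, Real.rpow_one]
  ring

theorem one_sub_two_rpow_pos {H : ℝ} (hH : H < 1 / 2) : 0 < 1 - (2 : ℝ) ^ (2 * H - 1) :=
  sub_pos.2 <| Real.rpow_lt_one_of_one_lt_of_neg one_lt_two (by linarith)

theorem one_sub_two_rpow_neg {H : ℝ} (hH : 1 / 2 < H) : 1 - (2 : ℝ) ^ (2 * H - 1) < 0 :=
  sub_neg.2 <| Real.one_lt_rpow one_lt_two (by linarith)

theorem Shat_bias_fBm_general
    {Ω : Type*} [MeasureSpace Ω] [IsProbabilityMeasure (ℙ : Measure Ω)]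
    (τ σ S H : ℝ) (hτ : 0 < τ) (hσ : 0 < σ)
    (n : ℕ)
    (pstar X : ℕ → Ω → ℝ)
    (hpL2 : ∀ i, i < n → MemLp (pstar i) 2 ℙ)
    (hpincr : ∀ i j, i ≤ j → j < n →
      ∫ ω, (pstar j ω - pstar i ω) ^ 2 ∂ℙ = σ ^ 2 * (((j : ℝ) - (i : ℝ)) * τ) ^ (2 * H))
    (hXm : ∀ i, Measurable (X i))
    (hXval : ∀ i, i < n → ∀ ω, X i ω = 1 ∨ X i ω = -1)
    (hXlaw : ∀ i, i < n → ℙ {ω | X i ω = 1} = 1 / 2)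
    (hXindep : iIndepFun
      (fun i : Fin n => X (i : ℕ)) ℙ)
    (hindep : IndepFun (fun ω => (fun i : Fin n => pstar (i : ℕ) ω))
      (fun ω => (fun i : Fin n => X (i : ℕ) ω)) ℙ)
    (L L' : ℕ) (hL : 1 ≤ L) (hL' : 1 ≤ L') (hne : L ≠ L')
    (hLn : L < n) (hL'n : L' < n) :
    ((∫ ω, Shat (Vhat1 (fun i ω => pstar i ω + S / 2 * X i ω)) n L L' ω ∂ℙ) - S ^ 2
      = 2 * σ ^ 2 * τ ^ (2 * H) * ((L' : ℝ) * (L : ℝ) ^ (2 * H)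
          - (L : ℝ) * (L' : ℝ) ^ (2 * H)) / ((L' : ℝ) - (L : ℝ))) ∧
    ((∫ ω, Shat (Vhat2 (fun i ω => pstar i ω + S / 2 * X i ω)) n L L' ω ∂ℙ) - S ^ 2
      = 2 * σ ^ 2 * τ ^ (2 * H) * ((L' : ℝ) * (L : ℝ) ^ (2 * H)
          - (L : ℝ) * (L' : ℝ) ^ (2 * H)) / ((L' : ℝ) - (L : ℝ))) ∧
    ((∫ ω, Shat (Vhat3 (fun i ω => pstar i ω + S / 2 * X i ω)) n L L' ω ∂ℙ) - S ^ 2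
      = 2 * σ ^ 2 * τ ^ (2 * H) * ((L' : ℝ) * (L : ℝ) ^ (2 * H)
          - (L : ℝ) * (L' : ℝ) ^ (2 * H)) / ((L' : ℝ) - (L : ℝ))) ∧
    (L = 1 → L' = 2 →
      2 * σ ^ 2 * τ ^ (2 * H) * ((L' : ℝ) * (L : ℝ) ^ (2 * H)
          - (L : ℝ) * (L' : ℝ) ^ (2 * H)) / ((L' : ℝ) - (L : ℝ))
        = 4 * σ ^ 2 * τ ^ (2 * H) * (1 - 2 ^ (2 * H - 1))) ∧
    (H < 1 / 2 → 0 < 4 * σ ^ 2 * τ ^ (2 * H) * (1 - 2 ^ (2 * H - 1))) ∧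
    (1 / 2 < H → 4 * σ ^ 2 * τ ^ (2 * H) * (1 - 2 ^ (2 * H - 1)) < 0) := by
  have hpincr' : ∀ i j, i < j → j < n → ∫ ω, (pstar j ω - pstar i ω) ^ 2 ∂ℙ =
      σ ^ 2 * (((j - i : ℕ) : ℝ) * τ) ^ (2 * H) := fun i j hij hjn => by
    rw [hpincr i j hij.le hjn, Nat.cast_sub hij.le]
  have hvar := hasVariogram_add_mul_sign (γ := fun h => σ ^ 2 * ((h : ℝ) * τ) ^ (2 * H)) S hpL2
    hpincr' hXm hXval hXlaw hXindep hindep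
  have hpos : 0 < 4 * σ ^ 2 * τ ^ (2 * H) := by positivity
  refine ⟨?_, ?_, ?_, ?_, fun h => mul_pos hpos (one_sub_two_rpow_pos h),
    fun h => mul_neg_of_pos_of_neg hpos (one_sub_two_rpow_neg h)⟩
  · exact integral_Shat_sub_sq_of_fBm_variogram hτ.le hne
      (hvar.vhat1_unbiased hL hLn) (hvar.vhat1_unbiased hL' hL'n)
  · exact integral_Shat_sub_sq_of_fBm_variogram hτ.le hne
      (hvar.vhat2_unbiased hL hLn) (hvar.vhat2_unbiased hL' hL'n)
  · exact integral_Shat_sub_sq_of_fBm_variogram hτ.le hne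
      (hvar.vhat3_unbiased hL hLn) (hvar.vhat3_unbiased hL' hL'n)
  · rintro rfl rfl
    exact_mod_cast fBm_spread_bias_one_two σ τ H

/-- Under the market model with autocorrelated price increments (fractional Brownian mid-price
of Hurst exponent `H`), the standard spread estimator `Ŝ²_{1,v}(n,L,L')` is biased:
`E[Ŝ²_{1,v}] − S² = 2σ²τ^{2H}(L'·L^{2H} − L·L'^{2H})/(L'−L)`; for `(L,L') = (1,2)` the bias
equals `4σ²τ^{2H}(1 − 2^{2H−1})`, positive when `H < 1/2` and negative when `H > 1/2`. -/
theorem Shat_bias_fBm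
    {Ω : Type*} [MeasureSpace Ω] [IsProbabilityMeasure (ℙ : Measure Ω)]
    (τ σ S H : ℝ) (hτ : 0 < τ) (hσ : 0 < σ) (hS : 0 ≤ S) (hH : H ∈ Set.Ioo (0 : ℝ) 1)
    (n : ℕ) (hn : 2 ≤ n)
    (pstar X : ℕ → Ω → ℝ)
    (hpm : ∀ i, Measurable (pstar i))
    (hpL2 : ∀ i, i < n → MemLp (pstar i) 2 ℙ)
    (hpcent : ∀ i, i < n → ∫ ω, pstar i ω ∂ℙ = 0)
    (hpincr : ∀ i j, i ≤ j → j < n →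
      ∫ ω, (pstar j ω - pstar i ω) ^ 2 ∂ℙ = σ ^ 2 * (((j : ℝ) - (i : ℝ)) * τ) ^ (2 * H))
    (hXm : ∀ i, Measurable (X i))
    (hXval : ∀ i, i < n → ∀ ω, X i ω = 1 ∨ X i ω = -1)
    (hXlaw : ∀ i, i < n → ℙ {ω | X i ω = 1} = 1 / 2)
    (hXindep : iIndepFun
      (fun i : Fin n => X (i : ℕ)) ℙ)
    (hindep : IndepFun (fun ω => (fun i : Fin n => pstar (i : ℕ) ω))
      (fun ω => (fun i : Fin n => X (i : ℕ) ω)) ℙ)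
    (L L' : ℕ) (hL : 1 ≤ L) (hL' : 1 ≤ L') (hne : L ≠ L')
    (hLn : L < n) (hL'n : L' < n) :
    ((∫ ω, Shat (Vhat1 (fun i ω => pstar i ω + S / 2 * X i ω)) n L L' ω ∂ℙ) - S ^ 2
      = 2 * σ ^ 2 * τ ^ (2 * H) * ((L' : ℝ) * (L : ℝ) ^ (2 * H)
          - (L : ℝ) * (L' : ℝ) ^ (2 * H)) / ((L' : ℝ) - (L : ℝ))) ∧
    ((∫ ω, Shat (Vhat2 (fun i ω => pstar i ω + S / 2 * X i ω)) n L L' ω ∂ℙ) - S ^ 2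
      = 2 * σ ^ 2 * τ ^ (2 * H) * ((L' : ℝ) * (L : ℝ) ^ (2 * H)
          - (L : ℝ) * (L' : ℝ) ^ (2 * H)) / ((L' : ℝ) - (L : ℝ))) ∧
    ((∫ ω, Shat (Vhat3 (fun i ω => pstar i ω + S / 2 * X i ω)) n L L' ω ∂ℙ) - S ^ 2
      = 2 * σ ^ 2 * τ ^ (2 * H) * ((L' : ℝ) * (L : ℝ) ^ (2 * H)
          - (L : ℝ) * (L' : ℝ) ^ (2 * H)) / ((L' : ℝ) - (L : ℝ))) ∧
    (L = 1 → L' = 2 →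
      2 * σ ^ 2 * τ ^ (2 * H) * ((L' : ℝ) * (L : ℝ) ^ (2 * H)
          - (L : ℝ) * (L' : ℝ) ^ (2 * H)) / ((L' : ℝ) - (L : ℝ))
        = 4 * σ ^ 2 * τ ^ (2 * H) * (1 - 2 ^ (2 * H - 1))) ∧
    (H < 1 / 2 → 0 < 4 * σ ^ 2 * τ ^ (2 * H) * (1 - 2 ^ (2 * H - 1))) ∧
    (1 / 2 < H → 4 * σ ^ 2 * τ ^ (2 * H) * (1 - 2 ^ (2 * H - 1)) < 0) :=
  Shat_bias_fBm_general τ σ S H hτ hσ n pstar X hpL2 hpincr hXm hXval hXlaw hXindep hindep L L' hL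
    hL' hne hLn hL'n
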